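/- arXiv:1803.09991 — 2 statements merged into one kernel-verified Lean document; each statement's English description precedes it below -/
import Mathlib

section
/- For every real λ ≥ 0, the class SE(λ) is a subsemigroup of FEnd(Σ*): if s ∈ SE(λ) and t ∈ SE(λ), then the composition st ∈ SE(λ). -/
open Filter Topology

namespace AutHier

variable {A : Type*}

/-- The section (state) `f|_u` of a transformation `f : Σ* → Σ*` at the word `u`. -/
def sec (f : List A → List A) (u : List A) : List A → List A :=
  fun v => (f (u ++ v)).drop u.length

/-- `f` is an endomorphism of `Σ*`: it preserves lengths and prefixes. -/
def IsEnd (f : List A → List A) : Prop :=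
  (∀ u, (f u).length = u.length) ∧ ∀ u v, f u <+: f (u ++ v)

/-- `f` is a finite-state endomorphism of `Σ*` (an element of `FEnd(Σ*)`). -/
def IsFEnd (f : List A → List A) : Prop :=
  IsEnd f ∧ {g | ∃ u, g = sec f u}.Finite

/-- The activity `α_f(n)` of a transformation `f`:
the number of words `v` of length `n` which are images of some word `u`
of length `n` whose section `f|_u` is nontrivial. -/
noncomputable def activity (f : List A → List A) (n : ℕ) : ℕ :=
  Set.ncard {v : List A | v.length = n ∧
    ∃ u : List A, u.length = n ∧ sec f u ≠ id ∧ f u = v}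

/-- The class `SP(d)` of finite-state endomorphisms of
polynomial activity of degree at most `d`. -/
def SP (A : Type*) (d : ℤ) : Set (List A → List A) :=
  {t | IsFEnd t ∧
    Tendsto (fun n : ℕ => (activity t n : ℝ) / (n : ℝ) ^ (d + 1)) atTop (𝓝 0)}

/-- The class `SE(l)` of finite-state endomorphisms of
exponential activity of growth rate at most `l`. -/
def SE (A : Type*) (l : ℝ) : Set (List A → List A) :=
  {t | IsFEnd t ∧
    limsup (fun n : ℕ => Real.log (activity t n) / (n : ℝ)) atTop ≤ l}

/-- The stateset `Q'(t)` of the pruned automaton: all sections of `t` except `id`. -/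
def Qp (t : List A → List A) : Set (List A → List A) :=
  {g | ∃ u, g = sec t u} \ {id}

/-- One-letter transition of the determinized pruned output automaton of `t`. -/
def delta (t : List A → List A) (S : Set (List A → List A)) (y : A) :
    Set (List A → List A) :=
  {s' | s' ∈ Qp t ∧ ∃ s ∈ S, ∃ x : A, s [x] = [y] ∧ sec s [x] = s'}

/-- Extended transition function `δ*` of the determinized pruned output automaton. -/
def deltaStar (t : List A → List A) (S : Set (List A → List A)) (v : List A) :
    Set (List A → List A) :=
  v.foldl (delta t) S

/-- There is a chain of `k` cycles in the determinized pruned output automaton of `t`. -/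
def ChainOfCycles (t : List A → List A) (k : ℕ) : Prop :=
  ∃ (S : Fin k → Set (List A → List A)) (c : Fin k → List A),
    (∀ i, S i ≠ ∅) ∧ (∀ i, c i ≠ []) ∧
    (∀ h : 0 < k, ∃ v, deltaStar t {t} v = S ⟨0, h⟩) ∧
    (∀ i, deltaStar t (S i) (c i) = S i) ∧
    (∀ (i : Fin k) (h : (i : ℕ) + 1 < k),
      (∃ v, deltaStar t (S i) v = S ⟨(i : ℕ) + 1, h⟩) ∧
      ¬ (∃ v, deltaStar t (S ⟨(i : ℕ) + 1, h⟩) v = S i))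

/-- The edge relation of the orbit signalizer graph `Φ`: from the vertex `v = (s,t)`,
reading the letter `x`, with label `(x; m, ℓ)` where `m, ℓ` are the minimal integers
(`ℓ ≥ 1`) with `(s t^{m+ℓ})·x = (s t^m)·x`, the edge goes to
`v' = (r|_x, (t^ℓ)|_{r·x})` where `r = s t^m`. -/
def OSStep (v : (List A → List A) × (List A → List A)) (x : A) (m ℓ : ℕ)
    (v' : (List A → List A) × (List A → List A)) : Prop :=
  1 ≤ ℓ ∧ v.2^[m + ℓ] (v.1 [x]) = v.2^[m] (v.1 [x]) ∧
  (∀ m' ℓ' : ℕ, 1 ≤ ℓ' → v.2^[m' + ℓ'] (v.1 [x]) = v.2^[m'] (v.1 [x]) → m ≤ m') ∧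
  (∀ ℓ' : ℕ, 1 ≤ ℓ' → v.2^[m + ℓ'] (v.1 [x]) = v.2^[m] (v.1 [x]) → ℓ ≤ ℓ') ∧
  v' = (sec (v.2^[m] ∘ v.1) [x], sec (v.2^[ℓ]) ((v.2^[m] ∘ v.1) [x]))

/-- A walk of length `n` in the orbit signalizer graph `Φ`. -/
structure OSPath (A : Type*) (n : ℕ) where
  vert : Fin (n + 1) → (List A → List A) × (List A → List A)
  lett : Fin n → A
  idx : Fin n → ℕ
  per : Fin n → ℕ
  step : ∀ k : Fin n, OSStep (vert k.castSucc) (lett k) (idx k) (per k) (vert k.succ)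

/-- The inf-index-cost `i⁻(π)` of a walk with indices `idx` and periods `per`. -/
def iminusCost {n : ℕ} (idx per : Fin n → ℕ) : ℕ :=
  ∑ k : Fin n, if idx k = 0 then 0
    else (idx k - 1) * (∏ j ∈ Finset.univ.filter (· < k), per j) + 1

/-- The sup-index-cost `i⁺(π)` of a walk with indices `idx` and periods `per`. -/
def iplusCost {n : ℕ} (idx per : Fin n → ℕ) : ℕ :=
  ∑ k : Fin n, (∏ j ∈ Finset.univ.filter (· < k), per j) * idx k

/-- The period-cost `p(π)` of a walk with periods `per`. -/
def pCost {n : ℕ} (per : Fin n → ℕ) : ℕ :=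
  ∏ k : Fin n, per k

/-- The walk `w` starts at the vertex `(id, t)`, i.e. it is a walk in `Φ(t)` from its root. -/
def IsWalkFrom {n : ℕ} (t : List A → List A) (w : OSPath A n) : Prop :=
  w.vert 0 = (id, t)

/-- The vertex `v` is accessible from `(id, t)` in `Φ`, i.e. `v` is a vertex of `Φ(t)`. -/
def OSReach (t : List A → List A) (v : (List A → List A) × (List A → List A)) : Prop :=
  ∃ n : ℕ, ∃ w : OSPath A n, IsWalkFrom t w ∧ w.vert (Fin.last n) = v

/-- The set of inf-index-costs of walks in `Φ(t)` from `(id, t)`. -/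
def IminusCosts (t : List A → List A) : Set ℕ :=
  {c | ∃ n : ℕ, ∃ w : OSPath A n, IsWalkFrom t w ∧ c = iminusCost w.idx w.per}

/-- The set of sup-index-costs of walks in `Φ(t)` from `(id, t)`. -/
def IplusCosts (t : List A → List A) : Set ℕ :=
  {c | ∃ n : ℕ, ∃ w : OSPath A n, IsWalkFrom t w ∧ c = iplusCost w.idx w.per}

/-- The set of period-costs of walks in `Φ(t)` from `(id, t)`. -/
def PCosts (t : List A → List A) : Set ℕ :=
  {c | ∃ n : ℕ, ∃ w : OSPath A n, IsWalkFrom t w ∧ c = pCost w.per}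

/-- `w` is a simple cycle of `Φ(t)`: a closed walk of positive length, lying in `Φ(t)`,
with no repeated vertices. -/
def IsSimpleCycle {n : ℕ} (t : List A → List A) (w : OSPath A n) : Prop :=
  1 ≤ n ∧ OSReach t (w.vert 0) ∧ w.vert (Fin.last n) = w.vert 0 ∧
  ∀ j k : Fin (n + 1), (j : ℕ) < n → (k : ℕ) < n → w.vert j = w.vert k → j = k


/-!
Since `(st)|_u = s|_u t|_{s·u}`, a word is active for `st` only if it is active for `t` or is the
`t`-image of a word active for `s`. Hence `α_{st}(n) ≤ α_t(n) + α_s(n) ≤ 2 max (α_s(n), α_t(n))`,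
and the factor `2` is invisible in the exponential growth rate.
-/

theorem IsEnd.apply_append {s : List A → List A} (hs : IsEnd s) (u v : List A) :
    s (u ++ v) = s u ++ sec s u v := by
  have h : s u = (s (u ++ v)).take u.length := by
    rw [← hs.1 u]; exact List.prefix_iff_eq_take.mp (hs.2 u v)
  rw [sec, h, List.take_append_drop]

theorem IsEnd.sec_comp {s t : List A → List A} (hs : IsEnd s) (ht : IsEnd t) (u : List A) :
    sec (t ∘ s) u = sec t (s u) ∘ sec s u := by
  funext v
  change (t (s (u ++ v))).drop u.length = sec t (s u) (sec s u v)
  rw [hs.apply_append, ht.apply_append, List.drop_left' (by rw [ht.1, hs.1])]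

theorem IsEnd.comp {s t : List A → List A} (hs : IsEnd s) (ht : IsEnd t) : IsEnd (t ∘ s) := by
  refine ⟨fun u => (ht.1 _).trans (hs.1 u), fun u v => ?_⟩
  change t (s u) <+: t (s (u ++ v))
  rw [hs.apply_append]
  exact ht.2 _ _

theorem IsFEnd.comp {s t : List A → List A} (hs : IsFEnd s) (ht : IsFEnd t) :
    IsFEnd (t ∘ s) := by
  refine ⟨hs.1.comp ht.1, (ht.2.image2 (· ∘ ·) hs.2).subset ?_⟩
  rintro g ⟨u, rfl⟩
  rw [hs.1.sec_comp ht.1]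
  exact Set.mem_image2_of_mem ⟨s u, rfl⟩ ⟨u, rfl⟩

def activeImages (f : List A → List A) (n : ℕ) : Set (List A) :=
  {v | v.length = n ∧ ∃ u : List A, u.length = n ∧ sec f u ≠ id ∧ f u = v}

theorem activity_eq_ncard (f : List A → List A) (n : ℕ) :
    activity f n = (activeImages f n).ncard :=
  rfl

theorem activeImages_subset (f : List A → List A) (n : ℕ) :
    activeImages f n ⊆ {v | v.length = n} :=
  fun _ hv => hv.1

theorem activeImages_finite [Finite A] (f : List A → List A) (n : ℕ) :
    (activeImages f n).Finite :=
  (List.finite_length_eq A n).subset (activeImages_subset f n)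

theorem activeImages_comp_subset {s t : List A → List A} (hs : IsEnd s) (ht : IsEnd t)
    (n : ℕ) : activeImages (t ∘ s) n ⊆ activeImages t n ∪ t '' activeImages s n := by
  rintro _ ⟨hv, u, hu, hne, rfl⟩
  by_cases h : sec t (s u) = id
  · have hsu : sec s u ≠ id := fun h' => hne (by rw [hs.sec_comp ht, h, h', Function.id_comp])
    exact Or.inr ⟨s u, ⟨(hs.1 u).trans hu, u, hu, hsu, rfl⟩, rfl⟩
  · exact Or.inl ⟨hv, s u, (hs.1 u).trans hu, h, rfl⟩

theorem activity_comp_le [Finite A] {s t : List A → List A} (hs : IsEnd s) (ht : IsEnd t)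
    (n : ℕ) : activity (t ∘ s) n ≤ activity t n + activity s n := by
  simp only [activity_eq_ncard]
  calc (activeImages (t ∘ s) n).ncard
      ≤ (activeImages t n ∪ t '' activeImages s n).ncard :=
        Set.ncard_le_ncard (activeImages_comp_subset hs ht n)
          ((activeImages_finite t n).union ((activeImages_finite s n).image t))
    _ ≤ (activeImages t n).ncard + (t '' activeImages s n).ncard := Set.ncard_union_le _ _
    _ ≤ (activeImages t n).ncard + (activeImages s n).ncard :=
        Nat.add_le_add_left (Set.ncard_image_le (activeImages_finite s n)) _

theorem ncard_setOf_length_eq (A : Type*) [Fintype A] (n : ℕ) :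
    {v : List A | v.length = n}.ncard = Fintype.card A ^ n := by
  have e : {v : List A | v.length = n} ≃ List.Vector A n := Equiv.refl _
  rw [← Nat.card_coe_set_eq, Nat.card_congr e, Nat.card_eq_fintype_card, card_vector]

theorem activity_le_card_pow [Fintype A] (f : List A → List A) (n : ℕ) :
    activity f n ≤ Fintype.card A ^ n :=
  (Set.ncard_le_ncard (activeImages_subset f n) (List.finite_length_eq A n)).trans_eq
    (ncard_setOf_length_eq A n)

theorem log_natCast_monotone : Monotone fun n : ℕ => Real.log n := by
  intro a b h
  rcases Nat.eq_zero_or_pos a with rfl | ha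
  · simpa using Real.log_natCast_nonneg b
  · exact Real.log_le_log (by exact_mod_cast ha) (by exact_mod_cast h)

theorem log_natCast_add_le (a b : ℕ) :
    Real.log ((a + b : ℕ) : ℝ) ≤ Real.log 2 + max (Real.log a) (Real.log b) := by
  rcases Nat.eq_zero_or_pos (max a b) with hm | hm
  · obtain ⟨rfl, rfl⟩ : a = 0 ∧ b = 0 := by omega
    simp [Real.log_nonneg one_le_two]
  · calc Real.log ((a + b : ℕ) : ℝ)
        ≤ Real.log ((2 * max a b : ℕ) : ℝ) := log_natCast_monotone (by omega)
      _ = Real.log 2 + Real.log ((max a b : ℕ) : ℝ) := by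
        push_cast
        exact Real.log_mul two_ne_zero (by exact_mod_cast hm.ne')
      _ = Real.log 2 + max (Real.log a) (Real.log b) := by
        rw [log_natCast_monotone.map_max]

theorem isBoundedUnder_log_div_of_le_pow {a : ℕ → ℕ} {K : ℕ} (ha : ∀ n, a n ≤ K ^ n) :
    IsBoundedUnder (· ≤ ·) atTop fun n => Real.log (a n) / n := by
  refine isBoundedUnder_of ⟨Real.log K, fun n => ?_⟩
  rcases Nat.eq_zero_or_pos n with rfl | hn
  · simpa using Real.log_natCast_nonneg K
  · rw [div_le_iff₀ (by exact_mod_cast hn), mul_comm, ← Real.log_pow]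
    exact_mod_cast log_natCast_monotone (ha n)

theorem log_div_le_log_two_div_add_max {a b c : ℕ} (h : c ≤ a + b) (n : ℕ) :
    Real.log c / n ≤ Real.log 2 / n + max (Real.log a / n) (Real.log b / n) := by
  rw [max_div_div_right n.cast_nonneg, ← add_div]
  gcongr
  exact (log_natCast_monotone h).trans (log_natCast_add_le a b)

theorem limsup_log_div_le_of_le_add {a b c : ℕ → ℕ} {K : ℕ} {l : ℝ}
    (ha : ∀ n, a n ≤ K ^ n) (hb : ∀ n, b n ≤ K ^ n) (hc : ∀ n, c n ≤ a n + b n)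
    (hal : limsup (fun n : ℕ => Real.log (a n) / n) atTop ≤ l)
    (hbl : limsup (fun n : ℕ => Real.log (b n) / n) atTop ≤ l) :
    limsup (fun n : ℕ => Real.log (c n) / n) atTop ≤ l := by
  refine le_of_forall_pos_le_add fun ε hε => limsup_le_of_le
    (isCoboundedUnder_le_of_le atTop fun n =>
      div_nonneg (Real.log_natCast_nonneg _) n.cast_nonneg) ?_
  have ha' := eventually_lt_of_limsup_lt (hal.trans_lt (lt_add_of_pos_right l (half_pos hε)))
    (isBoundedUnder_log_div_of_le_pow ha)
  have hb' := eventually_lt_of_limsup_lt (hbl.trans_lt (lt_add_of_pos_right l (half_pos hε)))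
    (isBoundedUnder_log_div_of_le_pow hb)
  have h2 : ∀ᶠ n : ℕ in atTop, Real.log 2 / n ≤ ε / 2 :=
    (tendsto_const_div_atTop_nhds_zero_nat _).eventually (eventually_le_nhds (half_pos hε))
  filter_upwards [ha', hb', h2] with n ha' hb' h2
  calc Real.log (c n) / n
      ≤ Real.log 2 / n + max (Real.log (a n) / n) (Real.log (b n) / n) :=
        log_div_le_log_two_div_add_max (hc n) n
    _ ≤ ε / 2 + (l + ε / 2) := add_le_add h2 (max_le ha'.le hb'.le)
    _ = l + ε := by ring

theorem SE_mul_mem_general {A : Type*} [Fintype A] (l : ℝ)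
    (s t : List A → List A) (hs : s ∈ SE A l) (ht : t ∈ SE A l) :
    (fun u => t (s u)) ∈ SE A l :=
  ⟨hs.1.comp ht.1, limsup_log_div_le_of_le_add (activity_le_card_pow t) (activity_le_card_pow s)
    (activity_comp_le hs.1.1 ht.1.1) ht.2 hs.2⟩

/-- For every real `λ ≥ 0`, the class `SE(λ)` is a subsemigroup of `FEnd(Σ*)`. -/
theorem SE_mul_mem {A : Type*} [Fintype A] (l : ℝ) (hl : 0 ≤ l)
    (s t : List A → List A) (hs : s ∈ SE A l) (ht : t ∈ SE A l) :
    (fun u => t (s u)) ∈ SE A l :=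
  SE_mul_mem_general l s t hs ht

end AutHier
end

section
/- Index–period recursion along the orbit signalizer graph: let s, t ∈ FEnd(Σ*). For each x ∈ Σ, let m_x ≥ 0 and ℓ_x ≥ 1 be the minimal integers with (st^{m_x+ℓ_x})·x = (st^{m_x})·x (they exist since Σ is finite), and set r_x = st^{m_x}, s_x = r_x|_x, and t_x = (t^{ℓ_x})|_{r_x·x}. Assume that for every x ∈ Σ there exist integers i ≥ 0 and p ≥ 1 with s_x t_x^{i} = s_x t_x^{i+p}, and let (i_x, p_x) be the minimal such pair. Then there exists a minimal pair (i₀, p₀) with i₀ ≥ 0, p₀ ≥ 1 and s t^{i₀} = s t^{i₀+p₀}, and it satisfies p₀ = lcm_{x∈Σ}(ℓ_x · p_x) and max_{x∈Σ}(m_x + max(0, ℓ_x·(i_x − 1) + 1)) ≤ i₀ ≤ max_{x∈Σ}(m_x + ℓ_x · i_x). -/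
open Filter Topology

namespace AutHier

variable {A : Type*}

/-!
The maps `n ↦ s t^n` and `n ↦ s_x t_x^n` are orbits of `f ↦ f t` and `f ↦ f t_x`, and along an
eventually periodic orbit with minimal pair `(i, p)` a repetition at `n` with gap `c ≥ 1` occurs
exactly when `i ≤ n` and `p ∣ c`. An endomorphism is determined by its images of letters and its
sections at letters, so `s t^{n+c} = s t^n` splits letter by letter. At the letter `x` the image
condition reads `m_x ≤ n` and `ℓ_x ∣ c`; writing `n = m_x + ℓ_x q + j` with `j < ℓ_x` and
`c = ℓ_x k`, the section of `s t^n` at `x` is `s_x t_x^q (t^j)|_y` with `y = r_x·x`. So the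
sections agree as soon as `i_x ≤ q` and `p_x ∣ k`; conversely, multiplying on the right by
`(t^{ℓ_x - j})|_{t^j·y}` turns the trailing factor into `t_x` and forces `i_x ≤ q + 1`,
`p_x ∣ k`, and even `i_x ≤ q` when `j = 0`. Collecting the letters gives `p₀ = lcm ℓ_x p_x`
and the two bounds on `i₀`.
-/

section IndexPeriod

variable {X : Type*} {F : ℕ → X} {g : X → X} {i p n c : ℕ}

def IsIndexPeriod (F : ℕ → X) (i p : ℕ) : Prop :=
  1 ≤ p ∧ F (i + p) = F i ∧ (∀ i' p' : ℕ, 1 ≤ p' → F (i' + p') = F i' → i ≤ i') ∧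
    ∀ p' : ℕ, 1 ≤ p' → F (i + p') = F i → p ≤ p'

lemma apply_add_eq_iterate (hF : ∀ n, F (n + 1) = g (F n)) (n k : ℕ) :
    F (n + k) = g^[k] (F n) := by
  induction k with
  | zero => rfl
  | succ k ih => rw [← Nat.add_assoc, hF, ih, Function.iterate_succ_apply']

lemma add_eq_iff_isPeriodicPt (hF : ∀ n, F (n + 1) = g (F n)) :
    F (n + c) = F n ↔ Function.IsPeriodicPt g c (F n) := by
  rw [apply_add_eq_iterate hF]
  rfl

lemma exists_isIndexPeriod (hF : ∀ n, F (n + 1) = g (F n)) (hc : 0 < c)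
    (h : F (n + c) = F n) : ∃ i p, IsIndexPeriod F i p := by
  classical
  have hper : ∃ j, F j ∈ Function.periodicPts g :=
    ⟨n, Function.mk_mem_periodicPts hc ((add_eq_iff_isPeriodicPt hF).1 h)⟩
  refine ⟨Nat.find hper, Function.minimalPeriod g (F (Nat.find hper)),
    Function.minimalPeriod_pos_of_mem_periodicPts (Nat.find_spec hper),
    (add_eq_iff_isPeriodicPt hF).2 (Function.isPeriodicPt_minimalPeriod _ _),
    fun i' p' hp' he => Nat.find_min' hper ?_,
    fun p' hp' he => ((add_eq_iff_isPeriodicPt hF).1 he).minimalPeriod_le hp'⟩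
  exact Function.mk_mem_periodicPts hp' ((add_eq_iff_isPeriodicPt hF).1 he)

theorem IsIndexPeriod.add_eq_iff (h : IsIndexPeriod F i p) (hF : ∀ n, F (n + 1) = g (F n))
    (hc : 0 < c) : F (n + c) = F n ↔ i ≤ n ∧ p ∣ c := by
  obtain ⟨hp, hip, hmin_i, hmin_p⟩ := h
  have hper : Function.IsPeriodicPt g p (F i) := (add_eq_iff_isPeriodicPt hF).1 hip
  have hpts : F i ∈ Function.periodicPts g := Function.mk_mem_periodicPts hp hper
  have hminimal : Function.minimalPeriod g (F i) = p :=
    le_antisymm (hper.minimalPeriod_le hp) <|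
      hmin_p _ (Function.minimalPeriod_pos_of_mem_periodicPts hpts)
        ((add_eq_iff_isPeriodicPt hF).2 (Function.isPeriodicPt_minimalPeriod _ _))
  constructor
  · intro he
    obtain ⟨k, rfl⟩ := Nat.exists_eq_add_of_le (hmin_i n c hc he)
    refine ⟨Nat.le_add_right i k, ?_⟩
    rw [← hminimal, ← Function.minimalPeriod_apply_iterate hpts k, ← apply_add_eq_iterate hF]
    exact ((add_eq_iff_isPeriodicPt hF).1 he).minimalPeriod_dvd
  · rintro ⟨hin, k, rfl⟩
    obtain ⟨j, rfl⟩ := Nat.exists_eq_add_of_le hin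
    rw [add_eq_iff_isPeriodicPt hF, apply_add_eq_iterate hF]
    exact (hper.mul_const k).apply_iterate j

theorem IsIndexPeriod.iterate_add_apply_eq_iff {z : X}
    (h : IsIndexPeriod (fun n => g^[n] z) i p) (hc : 0 < c) :
    g^[n + c] z = g^[n] z ↔ i ≤ n ∧ p ∣ c :=
  h.add_eq_iff (fun n => Function.iterate_succ_apply' g n z) hc

theorem IsIndexPeriod.iterate_add_comp_eq_iff {Y : Type*} {S : Y → X}
    (h : IsIndexPeriod (fun n => g^[n] ∘ S) i p) (hc : 0 < c) :
    g^[n + c] ∘ S = g^[n] ∘ S ↔ i ≤ n ∧ p ∣ c :=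
  h.add_eq_iff (g := (g ∘ ·)) (fun n => by rw [Function.iterate_succ']; rfl) hc

end IndexPeriod

lemma exists_eq_add_mul_add_of_le {m n ℓ : ℕ} (hmn : m ≤ n) (hℓ : 0 < ℓ) :
    ∃ q r, r < ℓ ∧ n = m + ℓ * q + r :=
  ⟨(n - m) / ℓ, (n - m) % ℓ, Nat.mod_lt _ hℓ, by have := Nat.div_add_mod (n - m) ℓ; omega⟩

lemma cast_add_max_le_of_le {m ℓ i n : ℕ} (hℓ : 0 < ℓ) (hm : m ≤ n)
    (hi : 0 < i → m + ℓ * (i - 1) + 1 ≤ n) :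
    (m : ℤ) + max 0 ((ℓ : ℤ) * ((i : ℤ) - 1) + 1) ≤ n := by
  rcases Nat.eq_zero_or_pos i with rfl | hpos
  · have : (1 : ℤ) ≤ ℓ := by exact_mod_cast hℓ
    rw [max_eq_left (by push_cast; linarith)]
    simpa using hm
  · obtain ⟨j, rfl⟩ : ∃ j, i = j + 1 := ⟨i - 1, by omega⟩
    have := hi hpos
    push_cast
    rw [add_sub_cancel_right, max_eq_right (by positivity)]
    exact_mod_cast this

section Endomorphism

variable {f g s t : List A → List A}

lemma IsEnd.append_eq (hf : IsEnd f) (u v : List A) : f (u ++ v) = f u ++ sec f u v := by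
  obtain ⟨w, hw⟩ := hf.2 u v
  rw [sec, ← hw, ← hf.1 u, List.drop_left]

lemma IsEnd.comp_s12 (hf : IsEnd f) (hg : IsEnd g) : IsEnd (g ∘ f) := by
  refine ⟨fun u => by simp [hg.1, hf.1], fun u v => ?_⟩
  rw [Function.comp_apply, Function.comp_apply, hf.append_eq]
  exact hg.2 (f u) _

lemma IsEnd.iterate (ht : IsEnd t) (n : ℕ) : IsEnd t^[n] := by
  induction n with
  | zero => exact ⟨fun _ => rfl, fun _ v => ⟨v, rfl⟩⟩
  | succ n ih => rw [Function.iterate_succ']; exact ih.comp_s12 ht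

lemma IsEnd.ext (hf : IsEnd f) (hg : IsEnd g)
    (h : ∀ x : A, f [x] = g [x] ∧ sec f [x] = sec g [x]) : f = g := by
  funext v
  cases v with
  | nil => rw [List.eq_nil_of_length_eq_zero (hf.1 []), List.eq_nil_of_length_eq_zero (hg.1 [])]
  | cons x w => rw [← List.singleton_append, hf.append_eq, hg.append_eq, (h x).1, (h x).2]

@[simp]
lemma sec_id (u : List A) : sec (id : List A → List A) u = id := by
  funext v
  simp [sec]

lemma sec_comp (hf : IsEnd f) (hg : IsEnd g) (u : List A) :
    sec (g ∘ f) u = sec g (f u) ∘ sec f u := by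
  funext v
  change (g (f (u ++ v))).drop u.length = sec g (f u) (sec f u v)
  rw [hf.append_eq, hg.append_eq, show u.length = (g (f u)).length by rw [hg.1, hf.1],
    List.drop_left]

lemma sec_iterate_of_apply_eq (ht : IsEnd t) {y : List A} (hy : t y = y) (q : ℕ) :
    sec t^[q] y = (sec t y)^[q] := by
  induction q with
  | zero => exact sec_id y
  | succ q ih =>
    rw [Function.iterate_succ', sec_comp (ht.iterate q) ht, Function.iterate_fixed hy, ih,
      Function.iterate_succ']

lemma sec_iterate_comp_eq (hs : IsEnd s) (ht : IsEnd t) {u : List A} {m ℓ : ℕ}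
    (hper : t^[m + ℓ] (s u) = t^[m] (s u)) (q r : ℕ) :
    sec (t^[m + ℓ * q + r] ∘ s) u =
      sec t^[r] ((t^[m] ∘ s) u) ∘ (sec t^[ℓ] ((t^[m] ∘ s) u))^[q] ∘ sec (t^[m] ∘ s) u := by
  have hfix : t^[ℓ] ((t^[m] ∘ s) u) = (t^[m] ∘ s) u := by
    rw [Function.comp_apply, ← Function.iterate_add_apply, Nat.add_comm, hper]
  have hfix' : t^[ℓ * q] ((t^[m] ∘ s) u) = (t^[m] ∘ s) u := by
    rw [Function.iterate_mul]; exact Function.iterate_fixed hfix q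
  have hE : IsEnd (t^[m] ∘ s) := hs.comp_s12 (ht.iterate m)
  rw [show m + ℓ * q + r = r + ℓ * q + m by ring, Function.iterate_add, Function.iterate_add]
  change sec (t^[r] ∘ t^[ℓ * q] ∘ t^[m] ∘ s) u = _
  rw [sec_comp (hE.comp_s12 (ht.iterate _)) (ht.iterate r), sec_comp hE (ht.iterate _),
    Function.comp_apply, hfix', Function.iterate_mul,
    sec_iterate_of_apply_eq (ht.iterate ℓ) hfix q]

lemma le_succ_and_dvd_of_sec_iterate_comp_eq (ht : IsEnd t) {y : List A}
    {S : List A → List A} {ℓ i p q r k : ℕ}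
    (hip : IsIndexPeriod (fun n => (sec t^[ℓ] y)^[n] ∘ S) i p) (hr : r ≤ ℓ) (hk : 0 < k)
    (h : sec t^[r] y ∘ (sec t^[ℓ] y)^[q + k] ∘ S = sec t^[r] y ∘ (sec t^[ℓ] y)^[q] ∘ S) :
    i ≤ q + 1 ∧ p ∣ k := by
  have hfactor : sec t^[ℓ - r] (t^[r] y) ∘ sec t^[r] y = sec t^[ℓ] y := by
    rw [← sec_comp (ht.iterate r) (ht.iterate _), ← Function.iterate_add, Nat.sub_add_cancel hr]
  have h' := congrArg (sec t^[ℓ - r] (t^[r] y) ∘ ·) h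
  simp only [← Function.comp_assoc, hfactor] at h'
  refine (hip.iterate_add_comp_eq_iff hk).1 ?_
  rw [show q + 1 + k = q + k + 1 by ring, Function.iterate_succ', Function.iterate_succ']
  exact h'

end Endomorphism

section Letter

variable {s t : List A → List A} {u : List A} {m ℓ i p n c : ℕ}

lemma le_and_dvd_of_iterate_add_comp_eq (hs : IsEnd s) (ht : IsEnd t)
    (hml : IsIndexPeriod (fun n => t^[n] (s u)) m ℓ)
    (hip : IsIndexPeriod (fun n => (sec t^[ℓ] ((t^[m] ∘ s) u))^[n] ∘ sec (t^[m] ∘ s) u) i p)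
    (hc : 0 < c) (h : t^[n + c] ∘ s = t^[n] ∘ s) :
    m ≤ n ∧ ℓ * p ∣ c ∧ (0 < i → m + ℓ * (i - 1) + 1 ≤ n) := by
  obtain ⟨hmn, k, rfl⟩ := (hml.iterate_add_apply_eq_iff hc).1 (congrFun h u)
  have hk : 0 < k := Nat.pos_of_mul_pos_left hc
  obtain ⟨q, r, hr, rfl⟩ := exists_eq_add_mul_add_of_le hmn hml.1
  have hsec := congrArg (sec · u) h
  rw [show m + ℓ * q + r + ℓ * k = m + ℓ * (q + k) + r by ring, sec_iterate_comp_eq hs ht hml.2.1,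
    sec_iterate_comp_eq hs ht hml.2.1] at hsec
  obtain ⟨hiq, hpk⟩ := le_succ_and_dvd_of_sec_iterate_comp_eq ht hip hr.le hk hsec
  refine ⟨hmn, Nat.mul_dvd_mul_left ℓ hpk, fun hi => ?_⟩
  obtain ⟨j, rfl⟩ : ∃ j, i = j + 1 := ⟨i - 1, by omega⟩
  rcases Nat.eq_zero_or_pos r with rfl | hr0
  · -- with `r = 0` the cancelled factor is `id`, so even `i ≤ q` holds
    have hiq0 := ((hip.iterate_add_comp_eq_iff hk).1 (by simpa using hsec)).1
    have := Nat.mul_le_mul_left ℓ hiq0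
    simp only [Nat.add_sub_cancel]
    nlinarith [hml.1]
  · have := Nat.mul_le_mul_left ℓ (Nat.le_of_succ_le_succ hiq)
    simp only [Nat.add_sub_cancel]
    omega

lemma iterate_add_comp_apply_and_sec_eq_of_le (hs : IsEnd s) (ht : IsEnd t)
    (hml : IsIndexPeriod (fun n => t^[n] (s u)) m ℓ)
    (hip : IsIndexPeriod (fun n => (sec t^[ℓ] ((t^[m] ∘ s) u))^[n] ∘ sec (t^[m] ∘ s) u) i p)
    (hn : m + ℓ * i ≤ n) (hc : ℓ * p ∣ c) :
    (t^[n + c] ∘ s) u = (t^[n] ∘ s) u ∧ sec (t^[n + c] ∘ s) u = sec (t^[n] ∘ s) u := by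
  rcases Nat.eq_zero_or_pos c with rfl | hc0
  · exact ⟨rfl, rfl⟩
  obtain ⟨k, rfl⟩ := hc
  have hk : 0 < k := Nat.pos_of_mul_pos_left hc0
  obtain ⟨q, r, hr, rfl⟩ := exists_eq_add_mul_add_of_le (Nat.le_of_add_right_le hn) hml.1
  have hiq : i ≤ q := by
    by_contra hqi
    have := Nat.mul_le_mul_left ℓ (Nat.lt_of_not_le hqi)
    rw [Nat.mul_succ] at this
    omega
  refine ⟨(hml.iterate_add_apply_eq_iff hc0).2 ⟨by omega, Dvd.intro _ (Nat.mul_assoc ..).symm⟩, ?_⟩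
  rw [show m + ℓ * q + r + ℓ * p * k = m + ℓ * (q + p * k) + r by ring,
    sec_iterate_comp_eq hs ht hml.2.1, sec_iterate_comp_eq hs ht hml.2.1,
    (hip.iterate_add_comp_eq_iff (Nat.mul_pos hip.1 hk)).2 ⟨hiq, Dvd.intro k rfl⟩]

end Letter

/-- Index–period recursion along the orbit signalizer graph: given `s, t ∈ FEnd(Σ*)`,
minimal data `(m_x, ℓ_x)` for each letter `x` (i.e. an edge of `Φ` out of `(s,t)`), and
minimal index–period pairs `(i_x, p_x)` at the target vertices `(s_x, t_x)`, there is a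
minimal pair `(i₀, p₀)` with `s t^{i₀} = s t^{i₀+p₀}`, satisfying
`p₀ = lcm_{x} (ℓ_x · p_x)` and
`max_x (m_x + max(0, ℓ_x (i_x - 1) + 1)) ≤ i₀ ≤ max_x (m_x + ℓ_x i_x)`.
Here composition is left-to-right, so `s t^k` is the function `t^[k] ∘ s`. -/
theorem index_period_recursion {A : Type*} [Fintype A] [Nonempty A]
    (s t : List A → List A) (hs : IsFEnd s) (ht : IsFEnd t)
    (m ℓ : A → ℕ)
    (hml : ∀ x : A, OSStep (s, t) x (m x) (ℓ x)
      (sec (t^[m x] ∘ s) [x], sec (t^[ℓ x]) ((t^[m x] ∘ s) [x])))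
    (i p : A → ℕ)
    (hip : ∀ x : A,
      1 ≤ p x ∧
      (sec (t^[ℓ x]) ((t^[m x] ∘ s) [x]))^[i x + p x] ∘ (sec (t^[m x] ∘ s) [x]) =
        (sec (t^[ℓ x]) ((t^[m x] ∘ s) [x]))^[i x] ∘ (sec (t^[m x] ∘ s) [x]) ∧
      (∀ i' p' : ℕ, 1 ≤ p' →
        (sec (t^[ℓ x]) ((t^[m x] ∘ s) [x]))^[i' + p'] ∘ (sec (t^[m x] ∘ s) [x]) =
          (sec (t^[ℓ x]) ((t^[m x] ∘ s) [x]))^[i'] ∘ (sec (t^[m x] ∘ s) [x]) →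
        i x ≤ i') ∧
      (∀ p' : ℕ, 1 ≤ p' →
        (sec (t^[ℓ x]) ((t^[m x] ∘ s) [x]))^[i x + p'] ∘ (sec (t^[m x] ∘ s) [x]) =
          (sec (t^[ℓ x]) ((t^[m x] ∘ s) [x]))^[i x] ∘ (sec (t^[m x] ∘ s) [x]) →
        p x ≤ p')) :
    ∃ i₀ p₀ : ℕ, 1 ≤ p₀ ∧ t^[i₀ + p₀] ∘ s = t^[i₀] ∘ s ∧
      (∀ i' p' : ℕ, 1 ≤ p' → t^[i' + p'] ∘ s = t^[i'] ∘ s → i₀ ≤ i') ∧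
      (∀ p' : ℕ, 1 ≤ p' → t^[i₀ + p'] ∘ s = t^[i₀] ∘ s → p₀ ≤ p') ∧
      p₀ = Finset.univ.lcm (fun x : A => ℓ x * p x) ∧
      Finset.univ.sup' Finset.univ_nonempty
          (fun x : A => (m x : ℤ) + max 0 ((ℓ x : ℤ) * ((i x : ℤ) - 1) + 1)) ≤ (i₀ : ℤ) ∧
      (i₀ : ℤ) ≤ Finset.univ.sup' Finset.univ_nonempty
          (fun x : A => (m x : ℤ) + (ℓ x : ℤ) * (i x : ℤ)) := by
  have hml' : ∀ x, IsIndexPeriod (fun n => t^[n] (s [x])) (m x) (ℓ x) :=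
    fun x => ⟨(hml x).1, (hml x).2.1, (hml x).2.2.1, (hml x).2.2.2.1⟩
  have hE : ∀ n, IsEnd (t^[n] ∘ s) := fun n => hs.1.comp_s12 (ht.1.iterate n)
  set N := Finset.univ.sup' Finset.univ_nonempty (fun x : A => m x + ℓ x * i x)
  set P := Finset.univ.lcm (fun x : A => ℓ x * p x)
  have hP : 0 < P := Nat.pos_of_ne_zero fun h => by
    obtain ⟨x, -, hx⟩ := Finset.lcm_eq_zero_iff.1 h
    exact (Nat.mul_pos (hml' x).1 (hip x).1).ne' hx
  have hNP : t^[N + P] ∘ s = t^[N] ∘ s := (hE _).ext (hE _) fun x =>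
    iterate_add_comp_apply_and_sec_eq_of_le hs.1 ht.1 (hml' x) (hip x)
      (Finset.le_sup' (fun x : A => m x + ℓ x * i x) (Finset.mem_univ x))
      (Finset.dvd_lcm (Finset.mem_univ x))
  obtain ⟨i₀, p₀, h₀⟩ := exists_isIndexPeriod (F := fun n => t^[n] ∘ s) (g := (t ∘ ·))
    (fun n => by rw [Function.iterate_succ']; rfl) hP hNP
  obtain ⟨hi₀N, hp₀P⟩ := (h₀.iterate_add_comp_eq_iff hP).1 hNP
  have hnec := fun x => le_and_dvd_of_iterate_add_comp_eq hs.1 ht.1 (hml' x) (hip x) h₀.1 h₀.2.1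
  refine ⟨i₀, p₀, h₀.1, h₀.2.1, h₀.2.2.1, h₀.2.2.2,
    Nat.dvd_antisymm hp₀P (Finset.lcm_dvd fun x _ => (hnec x).2.1),
    Finset.sup'_le _ _ fun x _ => cast_add_max_le_of_le (hml' x).1 (hnec x).1 (hnec x).2.2, ?_⟩
  exact_mod_cast hi₀N

end AutHier
end
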